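/- For every natural number n, the identity ∑_{j=0}^{n} binom(2n, 2j) · catalan(j) · catalan(n−j) = catalan(n) · catalan(n+1) holds. -/

import Mathlib

/-!
Multiplied by `(n + 1)! ^ 2`, the `j`-th summand becomes `(2n)! · C(n+1, j+1) · C(n+1, j)`, as
both sides have the same product with `j! (j+1)! (n-j)! (n-j+1)!`. By Vandermonde's identity these
sum to `(2n)! · C(2n+2, n)`, which the same factorial bookkeeping identifies with
`(n + 1)! ^ 2 · catalan n · catalan (n + 1)`.
-/

open Nat Finset

theorem catalan_mul_factorial_mul_factorial_succ (n : ℕ) :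
    catalan n * n ! * (n + 1)! = (2 * n)! := by
  have h := add_choose_mul_factorial_mul_factorial n n
  rw [← two_mul, ← centralBinom_eq_two_mul_choose, ← succ_mul_catalan_eq_centralBinom] at h
  rw [← h, factorial_succ]
  ring

theorem sum_range_choose_succ_mul_choose (n : ℕ) :
    ∑ j ∈ range (n + 1), (n + 1).choose (j + 1) * (n + 1).choose j = (2 * n + 2).choose n := by
  rw [show 2 * n + 2 = (n + 1) + (n + 1) by ring, add_choose_eq,
    Finset.Nat.sum_antidiagonal_eq_sum_range_succ_mk]
  refine sum_congr rfl fun j hj => ?_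
  rw [mul_comm, choose_symm_of_eq_add (n := n + 1) (a := n - j) (b := j + 1)]
  have := mem_range_succ_iff.mp hj
  omega

theorem factorial_sq_mul_choose_mul_catalan_mul_catalan {j n : ℕ} (h : j ≤ n) :
    (n + 1)! * (n + 1)! * ((2 * n).choose (2 * j) * catalan j * catalan (n - j)) =
      (2 * n)! * ((n + 1).choose (j + 1) * (n + 1).choose j) := by
  obtain ⟨k, rfl⟩ := exists_add_of_le h
  rw [Nat.add_sub_cancel_left]
  have hK : 0 < j ! * (j + 1)! * k ! * (k + 1)! := by positivity
  apply Nat.eq_of_mul_eq_mul_right hK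
  have hchoose_even := add_choose_mul_factorial_mul_factorial (2 * k) (2 * j)
  have hchoose_right := add_choose_mul_factorial_mul_factorial k (j + 1)
  have hchoose_left := add_choose_mul_factorial_mul_factorial (k + 1) j
  rw [show 2 * k + 2 * j = 2 * (j + k) by ring] at hchoose_even
  rw [show k + (j + 1) = j + k + 1 by ring] at hchoose_right
  rw [show k + 1 + j = j + k + 1 by ring] at hchoose_left
  calc (j + k + 1)! * (j + k + 1)! *
          ((2 * (j + k)).choose (2 * j) * catalan j * catalan k) * (j ! * (j + 1)! * k ! * (k + 1)!)
      = (j + k + 1)! * (j + k + 1)! * (2 * (j + k)).choose (2 * j) *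
          (catalan j * j ! * (j + 1)!) * (catalan k * k ! * (k + 1)!) := by ring
    _ = (2 * (j + k))! * ((j + k + 1).choose (j + 1) * k ! * (j + 1)!) *
          ((j + k + 1).choose j * (k + 1)! * j !) := by
      rw [hchoose_right, hchoose_left, catalan_mul_factorial_mul_factorial_succ,
        catalan_mul_factorial_mul_factorial_succ, ← hchoose_even]
      ring
    _ = _ := by ring

theorem factorial_sq_mul_catalan_mul_catalan_succ (n : ℕ) :
    (n + 1)! * (n + 1)! * (catalan n * catalan (n + 1)) = (2 * n)! * (2 * n + 2).choose n := by
  have hK : 0 < n ! * (n + 2)! := by positivity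
  apply Nat.eq_of_mul_eq_mul_right hK
  have hchoose := add_choose_mul_factorial_mul_factorial (n + 2) n
  rw [show n + 2 + n = 2 * n + 2 by ring] at hchoose
  calc (n + 1)! * (n + 1)! * (catalan n * catalan (n + 1)) * (n ! * (n + 2)!)
      = (catalan n * n ! * (n + 1)!) * (catalan (n + 1) * (n + 1)! * (n + 1 + 1)!) := by ring
    _ = (2 * n)! * ((2 * n + 2).choose n * (n + 2)! * n !) := by
      rw [catalan_mul_factorial_mul_factorial_succ, catalan_mul_factorial_mul_factorial_succ,
        hchoose, show 2 * (n + 1) = 2 * n + 2 by ring]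
    _ = _ := by ring

/-- For every natural number `n`, the identity
`∑_{j=0}^{n} binom(2n, 2j) · catalan(j) · catalan(n−j) = catalan(n) · catalan(n+1)` holds. -/
theorem sum_choose_catalan_eq_catalan_mul_catalan (n : ℕ) :
    ∑ j ∈ Finset.range (n + 1),
        Nat.choose (2 * n) (2 * j) * catalan j * catalan (n - j) =
      catalan n * catalan (n + 1) := by
  apply Nat.eq_of_mul_eq_mul_left (show 0 < (n + 1)! * (n + 1)! by positivity)
  calc (n + 1)! * (n + 1)! *
        ∑ j ∈ range (n + 1), (2 * n).choose (2 * j) * catalan j * catalan (n - j)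
      = ∑ j ∈ range (n + 1), (2 * n)! * ((n + 1).choose (j + 1) * (n + 1).choose j) := by
        rw [mul_sum]
        exact sum_congr rfl fun j hj =>
          factorial_sq_mul_choose_mul_catalan_mul_catalan (mem_range_succ_iff.mp hj)
    _ = (2 * n)! * (2 * n + 2).choose n := by rw [← mul_sum, sum_range_choose_succ_mul_choose]
    _ = (n + 1)! * (n + 1)! * (catalan n * catalan (n + 1)) :=
        (factorial_sq_mul_catalan_mul_catalan_succ n).symm
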